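/- Let Δ ≠ ∅ be a simplicial complex on the vertex set V = {1, 2, ..., n} with facets F₁, F₂, ..., F_ℓ, let S = k[X₁, X₂, ..., X_n] be the polynomial ring over a field k, and let I_Δ = ⋂_{i=1}^{ℓ} P_i where P_i = (X_α : α ∉ F_i) is the prime ideal generated by the variables not in F_i. Then the Stanley-Reisner ring R = k[Δ] = S/I_Δ is strictly closed (in its integral closure R̄ = ⊕_{i=1}^{ℓ} S/P_i), and hence R is a weakly Arf ring. -/

import Mathlib

/-
Write `S = k[X₁, …, Xₙ]`, `R = k[Δ]` and `R̄` for its integral closure. Each `S/Pᵢ` is a polynomial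
ring, hence an integrally closed domain, and since the facets are incomparable a non-zerodivisor
of `R` stays nonzero in every `S/Pᵢ`; so each projection `R → S/Pᵢ` extends to `R̄ → S/Pᵢ`,
and `R̄ → ∏ᵢ S/Pᵢ` is injective because `R → ∏ᵢ S/Pᵢ` is.
If `s ∈ R̄` satisfies `s ⊗ 1 = 1 ⊗ s`, applying `u ⊗ v ↦ uᵢ vⱼ` into `S/(Pᵢ + Pⱼ)` shows that the
components `sᵢ` agree modulo `Pᵢ + Pⱼ = P_{Fᵢ ∩ Fⱼ}`. Such a family glues to a single polynomial
(the coefficient of a monomial supported in a face does not depend on the facet containing it),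
whose class `r ∈ R` has the same components as `s`; hence `s = r`.
Strictly closed rings are weakly Arf: if `y/x, z/x ∈ R̄` then `u = yz/x ∈ R̄` satisfies
`u ⊗ 1 = (y/x) ⊗ z = (y/x) ⊗ x(z/x) = y ⊗ (z/x) = 1 ⊗ u`.
-/

open scoped TensorProduct

/-- `R` is a weakly Arf ring. -/
def IsWeaklyArf (R : Type*) [CommRing R] : Prop :=
  ∀ x y z : R, x ∈ nonZeroDivisors R →
    (∃ u ∈ integralClosure R (FractionRing R),
        u * algebraMap R (FractionRing R) x = algebraMap R (FractionRing R) y) →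
    (∃ v ∈ integralClosure R (FractionRing R),
        v * algebraMap R (FractionRing R) x = algebraMap R (FractionRing R) z) →
    ∃ r : R, algebraMap R (FractionRing R) r * algebraMap R (FractionRing R) x
        = algebraMap R (FractionRing R) (y * z)

/-- `R` is strictly closed in the `R`-algebra `S`. -/
def IsStrictlyClosedIn (R S : Type*) [CommRing R] [CommRing S] [Algebra R S] : Prop :=
  ∀ s : S, s ⊗ₜ[R] (1 : S) = (1 : S) ⊗ₜ[R] s → s ∈ (algebraMap R S).range

/-- `R` is strictly closed (in the integral closure `R̄` of `R` in its total ring of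
fractions `Q(R)`). -/
def IsStrictlyClosed (R : Type*) [CommRing R] : Prop :=
  IsStrictlyClosedIn R (integralClosure R (FractionRing R))

section StrictClosure

variable {R : Type*} [CommRing R]

theorem smul_tmul_one_eq_one_tmul_smul {S : Type*} [CommRing S] [Algebra R S] {u v : S}
    {x y z : R} (hu : x • u = algebraMap R S y) (hv : x • v = algebraMap R S z) :
    (z • u) ⊗ₜ[R] (1 : S) = (1 : S) ⊗ₜ[R] (z • u) := by
  have hyv : y • v = z • u := by
    rw [Algebra.smul_def y, ← hu, smul_mul_assoc, ← mul_smul_comm, hv, Algebra.smul_def z,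
      mul_comm]
  calc (z • u) ⊗ₜ[R] (1 : S)
      = u ⊗ₜ[R] (z • (1 : S)) := TensorProduct.smul_tmul _ _ _
    _ = u ⊗ₜ[R] (x • v) := by rw [hv, Algebra.algebraMap_eq_smul_one]
    _ = (x • u) ⊗ₜ[R] v := (TensorProduct.smul_tmul _ _ _).symm
    _ = (y • (1 : S)) ⊗ₜ[R] v := by rw [hu, Algebra.algebraMap_eq_smul_one]
    _ = (1 : S) ⊗ₜ[R] (y • v) := TensorProduct.smul_tmul _ _ _
    _ = (1 : S) ⊗ₜ[R] (z • u) := by rw [hyv]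

theorem IsStrictlyClosed.isWeaklyArf (h : IsStrictlyClosed R) : IsWeaklyArf R := by
  rintro x y z - ⟨u, hu, hux⟩ ⟨v, hv, hvx⟩
  obtain ⟨r, hr⟩ := h _ <| smul_tmul_one_eq_one_tmul_smul (x := x) (y := y) (z := z)
    (u := (⟨u, hu⟩ : integralClosure R (FractionRing R))) (v := ⟨v, hv⟩)
    (Subtype.ext <| by simpa [Algebra.smul_def, mul_comm] using hux)
    (Subtype.ext <| by simpa [Algebra.smul_def, mul_comm] using hvx)
  have hr' : algebraMap R (FractionRing R) r = z • u := congrArg Subtype.val hr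
  exact ⟨r, by rw [hr', Algebra.smul_def, mul_assoc, hux, map_mul, mul_comm]⟩

theorem eq_of_tmul_one_eq_one_tmul {S T : Type*} [CommRing S] [Algebra R S] [CommRing T]
    {θ₁ θ₂ : S →+* T} (hθ : θ₁.comp (algebraMap R S) = θ₂.comp (algebraMap R S)) {s : S}
    (hs : s ⊗ₜ[R] (1 : S) = (1 : S) ⊗ₜ[R] s) : θ₁ s = θ₂ s := by
  let : Algebra R T := (θ₁.comp (algebraMap R S)).toAlgebra
  let f₁ : S →ₐ[R] T := { θ₁ with commutes' := fun _ => rfl }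
  let f₂ : S →ₐ[R] T := { θ₂ with commutes' := fun r => (RingHom.congr_fun hθ r).symm }
  simpa [f₁, f₂] using congrArg (Algebra.TensorProduct.productMap f₁ f₂) hs

theorem exists_ringHom_integralClosure_comp_algebraMap {D : Type*} [CommRing D] [IsDomain D]
    [IsIntegrallyClosed D] (φ : R →+* D) (hφ : ∀ x ∈ nonZeroDivisors R, φ x ≠ 0) :
    ∃ ν : integralClosure R (FractionRing R) →+* D,
      ν.comp (algebraMap R (integralClosure R (FractionRing R))) = φ := by
  let K := FractionRing D
  have hunit : ∀ x : nonZeroDivisors R, IsUnit ((algebraMap D K).comp φ x) := fun x =>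
    isUnit_iff_ne_zero.mpr <| (map_ne_zero_iff _ (IsFractionRing.injective D K)).mpr (hφ x x.2)
  let ψ : FractionRing R →+* K := IsLocalization.lift hunit
  have hψ : ψ.comp (algebraMap R _) = (algebraMap D K).comp φ := IsLocalization.lift_comp hunit
  have hint (u : integralClosure R (FractionRing R)) : IsIntegral D (ψ u) :=
    u.2.map_of_comp_eq φ ψ hψ.symm
  have inj := IsIntegralClosure.algebraMap_injective D D K
  refine ⟨{ toFun := fun u => IsIntegralClosure.mk' D (ψ u) (hint u)
            map_one' := inj (by simp)
            map_mul' := fun u v => inj (by simp)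
            map_zero' := inj (by simp)
            map_add' := fun u v => inj (by simp) }, ?_⟩
  ext r
  exact inj (by simpa using RingHom.congr_fun hψ r)

theorem Subalgebra.injective_of_injective_comp_algebraMap {D : Type*} [CommRing D]
    {B : Subalgebra R (FractionRing R)} (ν : B →+* D)
    (hν : Function.Injective (ν.comp (algebraMap R B))) : Function.Injective ν := by
  rw [injective_iff_map_eq_zero]
  intro t ht
  obtain ⟨⟨a, d⟩, had⟩ := IsLocalization.surj (nonZeroDivisors R) (t : FractionRing R)
  have htd : t * algebraMap R B d = algebraMap R B a := Subtype.ext had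
  have ha : a = 0 := hν (by simp [← htd, ht])
  rw [ha, map_zero] at had
  exact Subtype.ext ((IsLocalization.map_units _ d).mul_left_eq_zero.mp had)

end StrictClosure

section QuotientByIntersection

variable {A ι : Type*} [CommRing A]

theorem Ideal.Quotient.mk_iInf_notMem_nonZeroDivisors [Finite ι] {P : ι → Ideal A}
    [∀ i, (P i).IsPrime] (hinc : ∀ i j, P i ≤ P j → P i = P j) {i : ι} {x : A}
    (hx : x ∈ P i) : Ideal.Quotient.mk (⨅ j, P j) x ∉ nonZeroDivisors (A ⧸ ⨅ j, P j) := by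
  classical
  cases nonempty_fintype ι
  obtain ⟨y, hy, hyi⟩ : ∃ y ∈ (Finset.univ.filter fun j => P j ≠ P i).inf P, y ∉ P i := by
    by_contra! h
    obtain ⟨j, hj, hji⟩ := Ideal.IsPrime.inf_le' inferInstance |>.mp h
    exact (Finset.mem_filter.mp hj).2 (hinc j i hji)
  have hxy : x * y ∈ ⨅ j, P j := by
    refine Submodule.mem_iInf _ |>.mpr fun j => ?_
    by_cases hj : P j = P i
    · exact hj ▸ Ideal.mul_mem_right y _ hx
    · exact Ideal.mul_mem_left _ x <|
        Finset.inf_le (f := P) (Finset.mem_filter.mpr ⟨Finset.mem_univ j, hj⟩) hy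
  intro hnzd
  refine hyi (Submodule.mem_iInf _ |>.mp ?_ i)
  rw [← Ideal.Quotient.eq_zero_iff_mem] at hxy ⊢
  rw [map_mul] at hxy
  exact (mem_nonZeroDivisors_iff.mp hnzd).1 _ hxy

theorem isStrictlyClosed_quotient_iInf (P : ι → Ideal A) [∀ i, (P i).IsPrime]
    [∀ i, IsIntegrallyClosed (A ⧸ P i)]
    (hzd : ∀ i, ∀ x ∈ P i, Ideal.Quotient.mk (⨅ j, P j) x ∉ nonZeroDivisors (A ⧸ ⨅ j, P j))
    (hglue : ∀ g : ι → A, (∀ i j, g i - g j ∈ P i ⊔ P j) → ∃ f, ∀ i, f - g i ∈ P i) :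
    IsStrictlyClosed (A ⧸ ⨅ i, P i) := by
  intro s hs
  let φ (i : ι) : (A ⧸ ⨅ j, P j) →+* A ⧸ P i := Ideal.Quotient.factor (iInf_le P i)
  have hφ (i : ι) : ∀ x ∈ nonZeroDivisors _, φ i x ≠ 0 := by
    rintro ⟨a⟩ ha h
    exact hzd i a (Ideal.Quotient.eq_zero_iff_mem.mp h) ha
  choose ν hν using fun i => exists_ringHom_integralClosure_comp_algebraMap (φ i) (hφ i)
  have hν_mk (i : ι) (a : A) :
      ν i (algebraMap _ _ (Ideal.Quotient.mk (⨅ j, P j) a)) = Ideal.Quotient.mk (P i) a := by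
    rw [← RingHom.comp_apply, hν]
    rfl
  choose g hg using fun i => Ideal.Quotient.mk_surjective (ν i s)
  obtain ⟨f, hf⟩ := hglue g fun i j => by
    have hθ :
        ((Ideal.Quotient.factor le_sup_left).comp (ν i)).comp (algebraMap (A ⧸ ⨅ j, P j) _) =
          ((Ideal.Quotient.factor (le_sup_right (a := P i))).comp (ν j)).comp
            (algebraMap _ _) := by
      ext a
      simp [hν_mk]
    have := eq_of_tmul_one_eq_one_tmul hθ hs
    rw [← Ideal.Quotient.eq]
    simpa [← hg] using this
  refine ⟨Ideal.Quotient.mk _ f,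
    Subalgebra.injective_of_injective_comp_algebraMap (RingHom.pi ν) ?_ ?_⟩
  · rw [injective_iff_map_eq_zero]
    intro x hx
    obtain ⟨a, rfl⟩ := Ideal.Quotient.mk_surjective x
    refine Ideal.Quotient.eq_zero_iff_mem.mpr <| Submodule.mem_iInf _ |>.mpr fun i => ?_
    simpa [hν_mk, Ideal.Quotient.eq_zero_iff_mem] using congrFun hx i
  · funext i
    simpa [hν_mk, ← hg, Ideal.Quotient.eq] using hf i

end QuotientByIntersection

namespace MvPolynomial

variable {σ R : Type*} [CommRing R]

variable (R) in
noncomputable def faceIdeal (s : Set σ) : Ideal (MvPolynomial σ R) :=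
  Ideal.span (X '' sᶜ)

theorem mem_faceIdeal_iff {s : Set σ} {p : MvPolynomial σ R} :
    p ∈ faceIdeal R s ↔ ∀ m : σ →₀ ℕ, ↑m.support ⊆ s → coeff m p = 0 := by
  rw [faceIdeal, mem_ideal_span_X_image]
  refine forall_congr' fun m => ?_
  simp only [mem_support_iff, Set.mem_compl_iff, Set.subset_def, Finset.mem_coe,
    Finsupp.mem_support_iff]
  grind

theorem faceIdeal_sup_faceIdeal (s t : Set σ) :
    faceIdeal R s ⊔ faceIdeal R t = faceIdeal R (s ∩ t) := by
  rw [faceIdeal, faceIdeal, faceIdeal, Set.compl_inter, Set.image_union, Ideal.span_union]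

theorem faceIdeal_le_faceIdeal_iff [Nontrivial R] {s t : Set σ} :
    faceIdeal R s ≤ faceIdeal R t ↔ t ⊆ s := by
  refine ⟨fun h a hat => by_contra fun has => ?_, fun h => ?_⟩
  · have := mem_faceIdeal_iff.mp (h (Ideal.subset_span ⟨a, has, rfl⟩)) (Finsupp.single a 1)
      (by simpa using hat)
    simp at this
  · exact Ideal.span_mono (Set.image_mono (Set.compl_subset_compl.mpr h))

theorem ker_killCompl_subtypeVal (s : Set σ) :
    RingHom.ker (killCompl (R := R) (Subtype.val_injective : Function.Injective ((↑) : s → σ))) =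
      faceIdeal R s := by
  classical
  ext p
  rw [RingHom.mem_ker, mem_faceIdeal_iff, MvPolynomial.ext_iff]
  simp only [coeff_killCompl, coeff_zero]
  refine ⟨fun h m hm => ?_, fun h m => h _ ?_⟩
  · rw [← Finsupp.mapDomain_comapDomain ((↑) : s → σ) Subtype.val_injective m
      (by rwa [Subtype.range_coe])]
    exact h _
  · intro a ha
    obtain ⟨b, -, rfl⟩ := Finset.mem_image.mp (Finsupp.mapDomain_support ha)
    exact b.2

noncomputable def quotientFaceIdealEquiv (s : Set σ) :
    (MvPolynomial σ R ⧸ faceIdeal R s) ≃ₐ[R] MvPolynomial s R :=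
  (Ideal.quotientEquivAlgOfEq R (ker_killCompl_subtypeVal s).symm).trans
    (Ideal.quotientKerAlgEquivOfSurjective fun q =>
      ⟨rename Subtype.val q, killCompl_rename_app _ q⟩)

instance [IsDomain R] (s : Set σ) : (faceIdeal R s).IsPrime :=
  Ideal.Quotient.isDomain_iff_prime _ |>.mp ((quotientFaceIdealEquiv s).toMulEquiv.isDomain _)

instance [IsDomain R] [UniqueFactorizationMonoid R] (s : Set σ) :
    IsIntegrallyClosed (MvPolynomial σ R ⧸ faceIdeal R s) :=
  have :=
    (quotientFaceIdealEquiv (R := R) s).toMulEquiv.symm.uniqueFactorizationMonoid inferInstance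
  UniqueFactorizationMonoid.instIsIntegrallyClosed

theorem exists_sub_mem_faceIdeal {ι : Type*} [Finite ι] (F : ι → Set σ)
    (g : ι → MvPolynomial σ R) (hg : ∀ i j, g i - g j ∈ faceIdeal R (F i) ⊔ faceIdeal R (F j)) :
    ∃ f, ∀ i, f - g i ∈ faceIdeal R (F i) := by
  classical
  cases nonempty_fintype ι
  let c (m : σ →₀ ℕ) : R := if h : ∃ i, ↑m.support ⊆ F i then coeff m (g h.choose) else 0
  let A := Finset.univ.biUnion fun i => (g i).support
  have hc (m : σ →₀ ℕ) (hm : m ∉ A) : c m = 0 := by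
    simp only [A, Finset.mem_biUnion, Finset.mem_univ, true_and, mem_support_iff, not_exists,
      not_not] at hm
    simp [c, hm]
  let f := ∑ m ∈ A, monomial m (c m)
  have hf (m : σ →₀ ℕ) : coeff m f = c m := by
    simp only [f, coeff_sum, coeff_monomial, Finset.sum_ite_eq']
    split_ifs with hm
    exacts [rfl, (hc m hm).symm]
  refine ⟨f, fun i => mem_faceIdeal_iff.mpr fun m hm => ?_⟩
  have h : ∃ i, ↑m.support ⊆ F i := ⟨i, hm⟩
  have hcompat := mem_faceIdeal_iff.mp (faceIdeal_sup_faceIdeal (R := R) _ _ ▸ hg h.choose i) m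
    (Set.subset_inter h.choose_spec hm)
  rw [coeff_sub, sub_eq_zero] at hcompat ⊢
  simpa [hf, c, h] using hcompat

end MvPolynomial

theorem stanleyReisner_strictlyClosed_general
    (k : Type*) [Field k] (n ℓ : ℕ)
    (Δ : Set (Finset (Fin n)))
    (F : Fin ℓ → Finset (Fin n))
    (hfacet : ∀ i, F i ∈ Δ ∧ ∀ s ∈ Δ, F i ⊆ s → s = F i) :
    IsStrictlyClosed (MvPolynomial (Fin n) k ⧸
      (⨅ i : Fin ℓ, Ideal.span ((MvPolynomial.X : Fin n → MvPolynomial (Fin n) k) '' {a : Fin n | a ∉ F i}))) ∧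
    IsWeaklyArf (MvPolynomial (Fin n) k ⧸
      (⨅ i : Fin ℓ, Ideal.span ((MvPolynomial.X : Fin n → MvPolynomial (Fin n) k) '' {a : Fin n | a ∉ F i}))) := by
  let P (i : Fin ℓ) : Ideal (MvPolynomial (Fin n) k) :=
    MvPolynomial.faceIdeal k (F i : Set (Fin n))
  have hinc (i j : Fin ℓ) (h : P i ≤ P j) : P i = P j := by
    rw [MvPolynomial.faceIdeal_le_faceIdeal_iff, Finset.coe_subset] at h
    simp only [P, (hfacet j).2 _ (hfacet i).1 h]
  have h : IsStrictlyClosed (MvPolynomial (Fin n) k ⧸ ⨅ i, P i) :=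
    isStrictlyClosed_quotient_iInf P
      (fun _ _ => Ideal.Quotient.mk_iInf_notMem_nonZeroDivisors hinc)
      (MvPolynomial.exists_sub_mem_faceIdeal _)
  exact ⟨h, h.isWeaklyArf⟩

/-- Let `Δ ≠ ∅` be a simplicial complex on the vertex set `{1, …, n}`
(a nonempty collection of subsets of the vertex set closed under taking subsets) with facets
`F₁, …, F_ℓ` (the maximal faces; every face is contained in some facet), let
`S = k[X₁, …, Xₙ]` and `I_Δ = ⋂ᵢ Pᵢ`, where `Pᵢ = (X_α : α ∉ Fᵢ)`.  Then the Stanley–Reisner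
ring `k[Δ] = S/I_Δ` is strictly closed, and hence a weakly Arf ring. -/
theorem stanleyReisner_strictlyClosed
    (k : Type*) [Field k] (n ℓ : ℕ)
    (Δ : Set (Finset (Fin n))) (hne : Δ.Nonempty)
    (hdown : ∀ s ∈ Δ, ∀ t ⊆ s, t ∈ Δ)
    (F : Fin ℓ → Finset (Fin n))
    (hfacet : ∀ i, F i ∈ Δ ∧ ∀ s ∈ Δ, F i ⊆ s → s = F i)
    (hcover : ∀ s ∈ Δ, ∃ i, s ⊆ F i) :
    IsStrictlyClosed (MvPolynomial (Fin n) k ⧸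
      (⨅ i : Fin ℓ, Ideal.span ((MvPolynomial.X : Fin n → MvPolynomial (Fin n) k) '' {a : Fin n | a ∉ F i}))) ∧
    IsWeaklyArf (MvPolynomial (Fin n) k ⧸
      (⨅ i : Fin ℓ, Ideal.span ((MvPolynomial.X : Fin n → MvPolynomial (Fin n) k) '' {a : Fin n | a ∉ F i}))) :=
  stanleyReisner_strictlyClosed_general k n ℓ Δ F hfacet
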